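/- Suppose every set of m points in general position in the plane contains ⌊(log₂ m)/2⌋ points in convex position. Then every set P of n points in general position in the plane (n > 16) admits a separating family of convex sets of cardinality at most 20 n log₂ log₂ n / log₂ n. -/

import Mathlib

/-
Greedily extract disjoint groups of `k = ⌊log₂ n / 4⌋` points in convex position while at least
`2^(2k) ≤ √n` points remain; this is possible by the hypothesis. Inside a group, a point lies in
the hull of a subset of the group only if it belongs to that subset, so `⌈log₂ k⌉` hulls of
subsets, indexed by the bits of a binary code of the group, separate its points. The hull of the
group and the hull of the other points lying inside it separate the group from the rest of `P`.
Each leftover point is separated from everything by its own singleton. This costs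
`(n / k) (⌈log₂ k⌉ + 2) + √n` convex sets.
-/

/-- Points of the plane. -/
abbrev Pt := ℝ × ℝ

/-- A family `F` of planar sets separates a finite point set `P` if for every
pair of distinct points of `P` some member of `F` contains exactly one of them. -/
def SepPts (F : Finset (Set Pt)) (P : Finset Pt) : Prop :=
  ∀ x ∈ P, ∀ y ∈ P, x ≠ y → ∃ S ∈ F, (x ∈ S ↔ y ∉ S)

/-- A (closed) halfplane. -/
def IsHalfplane (S : Set Pt) : Prop :=
  ∃ u : Pt, ∃ c : ℝ, u ≠ 0 ∧ S = {p : Pt | p.1 * u.1 + p.2 * u.2 ≤ c}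

/-- A closed disc of positive radius. -/
def IsClosedDisc (S : Set Pt) : Prop :=
  ∃ q : Pt, ∃ r : ℝ, 0 < r ∧ S = Metric.closedBall q r

/-- A finite point set is in general position if no three of its points are
collinear. -/
def GenPos (P : Finset Pt) : Prop :=
  ∀ a ∈ P, ∀ b ∈ P, ∀ c ∈ P, a ≠ b → a ≠ c → b ≠ c → ¬ Collinear ℝ ({a, b, c} : Set Pt)

/-- A finite point set is in convex position if each of its points is an
extreme point of the convex hull, i.e. lies outside the hull of the others. -/
def ConvexPos (Q : Finset Pt) : Prop :=
  ∀ q ∈ Q, q ∉ convexHull ℝ (↑(Q.erase q) : Set Pt)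

/-- A finite point set lying on a circle. -/
def OnCircle (P : Finset Pt) : Prop :=
  ∃ q : Pt, ∃ r : ℝ, 0 < r ∧ ∀ x ∈ P, dist x q = r

open Finset

section ConvexHull

variable {E : Type*} [NormedAddCommGroup E] [NormedSpace ℝ E]

theorem notMem_convexHull_of_subset_convexHull_insert {x : E} {t S : Set E} (ht : t.Finite)
    (hx : x ∉ convexHull ℝ t) (hS : S ⊆ convexHull ℝ (insert x t)) (hxS : x ∉ S) :
    x ∉ convexHull ℝ S := by
  obtain ⟨f, u, hf, hu⟩ :=
    geometric_hahn_banach_closed_point (convex_convexHull ℝ t)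
      (ht.isClosed_convexHull (𝕜 := ℝ)) hx
  -- `f` separates `x` from `conv t`, so it is smaller than `f x` on `conv (insert x t) \ {x}`.
  suffices hSf : S ⊆ {y | f y < f x} from fun hmem ↦
    lt_irrefl (f x) (convexHull_min hSf (convex_halfSpace_lt f.isLinear (f x)) hmem)
  intro s hs
  have hsx : s ≠ x := ne_of_mem_of_not_mem hs hxS
  rcases t.eq_empty_or_nonempty with rfl | htne
  · simpa [hsx] using hS hs
  obtain ⟨y, hy : y = x, z, hz, hsz⟩ :=
    mem_convexJoin.1 (convexHull_insert (𝕜 := ℝ) htne ▸ hS hs)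
  rw [hy] at hsz
  have hfz : f z < f x := (hf z hz).trans hu
  obtain rfl | hsz' := eq_or_ne s z
  · exact hfz
  obtain ⟨a, b, -, hb, hab, rfl⟩ := mem_openSegment_of_ne_left_right hsx.symm (Ne.symm hsz') hsz
  have hgain := mul_pos hb (sub_pos.2 hfz)
  rw [Set.mem_ofPred_eq, map_add, map_smul, map_smul, smul_eq_mul, smul_eq_mul,
    eq_sub_of_add_eq hab]
  linarith

end ConvexHull

theorem Finset.exists_separating_subsets {α : Type*} [DecidableEq α] {s : Finset α} {c : ℕ}
    (hs : s.card ≤ 2 ^ c) :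
    ∃ 𝓑 : Finset (Finset α), 𝓑.card ≤ c ∧ (∀ B ∈ 𝓑, B ⊆ s) ∧
      ∀ x ∈ s, ∀ y ∈ s, x ≠ y → ∃ B ∈ 𝓑, (x ∈ B ↔ y ∉ B) := by
  obtain ⟨e⟩ : Nonempty (s ↪ (Fin c → Bool)) :=
    Function.Embedding.nonempty_of_card_le (by simpa using hs)
  let code : α → Fin c → Bool := fun x ↦ if hx : x ∈ s then e ⟨x, hx⟩ else fun _ ↦ false
  have hcode : Set.InjOn code s := fun x hx y hy hxy ↦ by
    simp only [code, dif_pos (mem_coe.1 hx), dif_pos (mem_coe.1 hy)] at hxy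
    exact congrArg Subtype.val (e.injective hxy)
  refine ⟨univ.image fun i ↦ s.filter (code · i), ?_, ?_, ?_⟩
  · exact card_image_le.trans (by simp)
  · simp only [mem_image, mem_univ, true_and, forall_exists_index, forall_apply_eq_imp_iff]
    exact fun i ↦ filter_subset _ _
  · intro x hx y hy hxy
    obtain ⟨i, hi⟩ := Function.ne_iff.1 (hcode.ne hx hy hxy)
    refine ⟨s.filter (code · i), mem_image_of_mem _ (mem_univ i), ?_⟩
    simp only [mem_filter, hx, hy, true_and]
    revert hi; cases code x i <;> cases code y i <;> simp

theorem Finset.exists_greedy_partition {α : Type*} [DecidableEq α] {p : Finset α → Prop}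
    {k N : ℕ} (hk : 0 < k) (T : Finset α)
    (hext : ∀ U ⊆ T, N ≤ U.card → ∃ Q ⊆ U, Q.card = k ∧ p Q) :
    ∃ 𝒬 : Finset (Finset α), ∃ R : Finset α, (∀ Q ∈ 𝒬, p Q ∧ Q.card = k) ∧
      𝒬.card * k ≤ T.card ∧ R.card < N ∧ T ⊆ 𝒬.biUnion id ∪ R := by
  induction T using Finset.strongInduction with
  | H T ih =>
  by_cases hT : N ≤ T.card
  · obtain ⟨Q, hQT, hQk, hpQ⟩ := hext T subset_rfl hT
    obtain ⟨𝒬, R, h𝒬, h𝒬card, hR, hcover⟩ :=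
      ih (T \ Q) (sdiff_ssubset hQT (card_pos.1 (hQk ▸ hk)))
        fun U hU ↦ hext U (hU.trans sdiff_subset)
    refine ⟨insert Q 𝒬, R, forall_mem_insert _ _ _ |>.2 ⟨⟨hpQ, hQk⟩, h𝒬⟩, ?_, hR, ?_⟩
    · have hsdiff : (T \ Q).card + k = T.card := by
        rw [card_sdiff_of_subset hQT, hQk, Nat.sub_add_cancel (hQk ▸ card_le_card hQT)]
      calc (insert Q 𝒬).card * k ≤ (𝒬.card + 1) * k :=
            Nat.mul_le_mul_right _ (card_insert_le _ _)
        _ ≤ T.card := by rw [add_one_mul]; omega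
    · intro x hx
      by_cases hxQ : x ∈ Q
      · exact mem_union_left _ (mem_biUnion.2 ⟨Q, mem_insert_self _ _, hxQ⟩)
      · rcases mem_union.1 (hcover (mem_sdiff.2 ⟨hx, hxQ⟩)) with h | h
        · exact mem_union_left _ (biUnion_subset_biUnion_of_subset_left _ (subset_insert _ _) h)
        · exact mem_union_right _ h
  · exact ⟨∅, T, by simp, by simp, not_le.1 hT, subset_union_right⟩

theorem GenPos.mono {P T : Finset Pt} (hP : GenPos P) (hTP : T ⊆ P) : GenPos T :=
  fun a ha b hb c hc ↦ hP a (hTP ha) b (hTP hb) c (hTP hc)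

theorem ConvexPos.mono {Q Q' : Finset Pt} (hQ : ConvexPos Q) (hQ' : Q' ⊆ Q) : ConvexPos Q' :=
  fun q hq hmem ↦ hQ q (hQ' hq) (convexHull_mono (coe_subset.2 (erase_subset_erase q hQ')) hmem)

theorem ConvexPos.mem_convexHull_iff {Q : Finset Pt} (hQ : ConvexPos Q) {q : Pt} (hq : q ∈ Q)
    {S : Set Pt} (hS : S ⊆ convexHull ℝ ↑Q) : q ∈ convexHull ℝ S ↔ q ∈ S := by
  refine ⟨fun hqS ↦ ?_, fun hqS ↦ subset_convexHull ℝ S hqS⟩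
  by_contra hqS'
  refine notMem_convexHull_of_subset_convexHull_insert (Q.erase q).finite_toSet (hQ q hq) ?_
    hqS' hqS
  rwa [← coe_insert, insert_erase hq]

def SeparatesFrom (F : Finset (Set Pt)) (A P : Finset Pt) : Prop :=
  ∀ x ∈ A, ∀ y ∈ P, x ≠ y → ∃ S ∈ F, (x ∈ S ↔ y ∉ S)

theorem SeparatesFrom.sepPts {F : Finset (Set Pt)} {A P : Finset Pt} (h : SeparatesFrom F A P)
    (hPA : P ⊆ A) : SepPts F P :=
  fun x hx y hy hxy ↦ h x (hPA hx) y hy hxy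

theorem SeparatesFrom.union {F G : Finset (Set Pt)} {A B P : Finset Pt}
    (hF : SeparatesFrom F A P) (hG : SeparatesFrom G B P) : SeparatesFrom (F ∪ G) (A ∪ B) P := by
  intro x hx y hy hxy
  rcases mem_union.1 hx with hxA | hxB
  · obtain ⟨S, hS, hxyS⟩ := hF x hxA y hy hxy
    exact ⟨S, mem_union_left _ hS, hxyS⟩
  · obtain ⟨S, hS, hxyS⟩ := hG x hxB y hy hxy
    exact ⟨S, mem_union_right _ hS, hxyS⟩

theorem separatesFrom_biUnion {ι : Type*} {I : Finset ι} {F : ι → Finset (Set Pt)}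
    {A : ι → Finset Pt} {P : Finset Pt} (h : ∀ i ∈ I, SeparatesFrom (F i) (A i) P) :
    SeparatesFrom (I.biUnion F) (I.biUnion A) P := by
  intro x hx y hy hxy
  obtain ⟨i, hi, hxi⟩ := mem_biUnion.1 hx
  obtain ⟨S, hS, hxyS⟩ := h i hi x hxi y hy hxy
  exact ⟨S, mem_biUnion.2 ⟨i, hi, hS⟩, hxyS⟩

theorem separatesFrom_image_singleton (R P : Finset Pt) :
    SeparatesFrom (R.image ({·})) R P :=
  fun x hx _ _ hxy ↦ ⟨{x}, mem_image_of_mem _ hx, iff_of_true rfl (Ne.symm hxy)⟩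

/-- The witness: the hull of `Q`, the hull of the points of `P \ Q` inside it, and the hulls of
the `c` subsets of `Q` given by `Finset.exists_separating_subsets`. -/
theorem ConvexPos.exists_separatesFrom {Q : Finset Pt} (hQ : ConvexPos Q) (P : Finset Pt) {c : ℕ}
    (hc : Q.card ≤ 2 ^ c) :
    ∃ F : Finset (Set Pt), (∀ A ∈ F, Convex ℝ A) ∧ SeparatesFrom F Q P ∧ F.card ≤ c + 2 := by
  classical
  obtain ⟨𝓑, h𝓑card, h𝓑Q, h𝓑sep⟩ := exists_separating_subsets hc
  set hull : Finset Pt → Set Pt := fun B ↦ convexHull ℝ ↑B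
  set I := P.filter (fun y ↦ y ∉ Q ∧ y ∈ hull Q)
  refine ⟨insert (hull Q) (insert (hull I) (𝓑.image hull)), ?_, ?_, ?_⟩
  · simp only [forall_mem_insert, forall_mem_image]
    exact ⟨convex_convexHull ℝ _, convex_convexHull ℝ _, fun B _ ↦ convex_convexHull ℝ _⟩
  · intro x hx y hy hxy
    by_cases hyQ : y ∈ Q
    · obtain ⟨B, hB, hxyB⟩ := h𝓑sep x hx y hyQ hxy
      have hBQ : (B : Set Pt) ⊆ convexHull ℝ ↑Q :=
        (coe_subset.2 (h𝓑Q B hB)).trans (subset_convexHull ℝ _)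
      refine ⟨hull B, mem_insert_of_mem (mem_insert_of_mem (mem_image_of_mem _ hB)), ?_⟩
      rwa [hQ.mem_convexHull_iff hx hBQ, hQ.mem_convexHull_iff hyQ hBQ]
    by_cases hyhull : y ∈ hull Q
    · have hIQ : (I : Set Pt) ⊆ convexHull ℝ ↑Q := fun z hz ↦ (mem_filter.1 hz).2.2
      refine ⟨hull I, mem_insert_of_mem (mem_insert_self _ _), iff_of_false ?_ ?_⟩
      · rw [hQ.mem_convexHull_iff hx hIQ]
        exact fun hxI ↦ (mem_filter.1 hxI).2.1 hx
      · exact not_not.2 (subset_convexHull ℝ _ (mem_filter.2 ⟨hy, hyQ, hyhull⟩))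
    · exact ⟨hull Q, mem_insert_self _ _, iff_of_true (subset_convexHull ℝ _ hx) hyhull⟩
  · calc _ ≤ (insert (hull I) (𝓑.image hull)).card + 1 := card_insert_le _ _
      _ ≤ 𝓑.card + 2 := by grw [card_insert_le, card_image_le]
      _ ≤ c + 2 := by omega

theorem exists_sepPts_of_cover {P R : Finset Pt} {𝒬 : Finset (Finset Pt)} {c : ℕ}
    (h𝒬 : ∀ Q ∈ 𝒬, ConvexPos Q ∧ Q.card ≤ 2 ^ c) (hcover : P ⊆ 𝒬.biUnion id ∪ R) :
    ∃ F : Finset (Set Pt), (∀ A ∈ F, Convex ℝ A) ∧ SepPts F P ∧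
      F.card ≤ 𝒬.card * (c + 2) + R.card := by
  choose! G hGconv hGsep hGcard using fun Q hQ ↦ (h𝒬 Q hQ).1.exists_separatesFrom P (h𝒬 Q hQ).2
  refine ⟨𝒬.biUnion G ∪ R.image ({·}), ?_, ?_, ?_⟩
  · intro A hA
    rcases mem_union.1 hA with hA | hA
    · obtain ⟨Q, hQ, hAQ⟩ := mem_biUnion.1 hA
      exact hGconv Q hQ A hAQ
    · obtain ⟨x, -, rfl⟩ := mem_image.1 hA
      exact convex_singleton x
  · exact ((separatesFrom_biUnion hGsep).union (separatesFrom_image_singleton R P)).sepPts hcover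
  · calc _ ≤ (𝒬.biUnion G).card + (R.image ({·})).card := card_union_le _ _
      _ ≤ ∑ Q ∈ 𝒬, (G Q).card + R.card := by grw [card_biUnion_le, card_image_le]
      _ ≤ 𝒬.card * (c + 2) + R.card := by grw [sum_le_card_nsmul 𝒬 _ _ hGcard, smul_eq_mul]

section Counting

open Real

theorem logb_lt_natLog_add_one (b n : ℕ) : logb b n < Nat.log b n + 1 := by
  rw [← natFloor_logb_natCast]
  exact Nat.lt_floor_add_one _

theorem natClog_two_lt_logb_add_one {n : ℕ} (hn : 1 ≤ n) : (Nat.clog 2 n : ℝ) < logb 2 n + 1 := by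
  have h := Nat.ceil_lt_add_one (logb_nonneg one_lt_two (Nat.one_le_cast.2 hn))
  rwa [← Nat.cast_ofNat, natCeil_logb_natCast] at h

theorem count_le_twenty_mul_logb_logb_div_logb {n g r : ℕ} (hn : 16 < n)
    (hg : Nat.log 2 n / 4 * g ≤ n) (hr : r < 2 ^ (2 * (Nat.log 2 n / 4))) :
    ((g * (Nat.clog 2 (Nat.log 2 n / 4) + 2) + r : ℕ) : ℝ) ≤
      20 * n * logb 2 (logb 2 n) / logb 2 n := by
  set L := Nat.log 2 n
  set k := L / 4
  set x := logb 2 n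
  have hL : 4 ≤ L := Nat.le_log_of_pow_le one_lt_two (by omega)
  have hk : 1 ≤ k := by omega
  have hkR : (1 : ℝ) ≤ k := by exact_mod_cast hk
  have hLx : (L : ℝ) ≤ x := by simpa using natLog_le_logb n 2
  have hxL : x < L + 1 := by simpa using logb_lt_natLog_add_one 2 n
  have h4k : 4 * (k : ℝ) ≤ x := le_trans (by exact_mod_cast (by omega : 4 * k ≤ L)) hLx
  have hx8k : x ≤ 8 * k := by
    have : (L : ℝ) + 1 ≤ 8 * k := by exact_mod_cast (by omega : L + 1 ≤ 8 * k)
    linarith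
  have hlogb4 : logb 2 4 = 2 := by
    rw [show (4 : ℝ) = 2 ^ (2 : ℕ) by norm_num, logb_pow, logb_self_eq_one one_lt_two]; norm_num
  have hLL : 2 ≤ logb 2 x :=
    hlogb4.symm.trans_le (logb_le_logb_of_le one_lt_two four_pos (by linarith))
  have hc : (Nat.clog 2 k : ℝ) + 2 ≤ 3 / 2 * logb 2 x := by
    have hlogk : logb 2 k + 2 ≤ logb 2 x :=
      calc logb 2 k + 2 = logb 2 (4 * k) := by
            rw [logb_mul four_ne_zero (by positivity), hlogb4, add_comm]
        _ ≤ logb 2 x := logb_le_logb_of_le one_lt_two (by positivity) h4k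
    linarith [natClog_two_lt_logb_add_one hk]
  have hkr : k * r ≤ n :=
    calc k * r ≤ 2 ^ k * 2 ^ (2 * k) := Nat.mul_le_mul Nat.lt_two_pow_self.le hr.le
      _ = 2 ^ (3 * k) := by rw [← pow_add]; ring_nf
      _ ≤ 2 ^ L := Nat.pow_le_pow_right two_pos (by omega)
      _ ≤ n := Nat.pow_log_le_self 2 (by omega)
  have hgR : (k : ℝ) * g ≤ n := by exact_mod_cast hg
  have hkrR : (k : ℝ) * r ≤ n := by exact_mod_cast hkr
  rw [le_div_iff₀ (by linarith)]
  push_cast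
  calc ((g : ℝ) * (Nat.clog 2 k + 2) + r) * x ≤ (g * (Nat.clog 2 k + 2) + r) * (8 * k) := by
        gcongr
    _ = 8 * (k * g) * (Nat.clog 2 k + 2) + 8 * (k * r) := by ring
    _ ≤ 8 * n * (3 / 2 * logb 2 x) + 8 * n := by gcongr
    _ ≤ 20 * n * logb 2 x := by nlinarith

end Counting

/-- Assuming every `m`-point set in general position contains `⌊log₂ m / 2⌋`
points in convex position, every set of `n > 16` points in general position can
be separated by at most `20 n log₂ log₂ n / log₂ n` convex sets. -/
theorem convex_general_position_upper_bound (n : ℕ) (hn : 16 < n)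
    (hES : ∀ m : ℕ, ∀ T : Finset Pt, T.card = m → GenPos T →
      ∃ Q ⊆ T, Q.card = Nat.log 2 m / 2 ∧ ConvexPos Q)
    (P : Finset Pt) (hP : P.card = n) (hgp : GenPos P) :
    ∃ S : Finset (Set Pt), (∀ A ∈ S, Convex ℝ A) ∧ SepPts S P ∧
      (S.card : ℝ) ≤ 20 * n * Real.logb 2 (Real.logb 2 n) / Real.logb 2 n := by
  set k := Nat.log 2 n / 4
  have hk : 0 < k := Nat.div_pos (Nat.le_log_of_pow_le one_lt_two (by omega)) four_pos
  have hextract : ∀ U ⊆ P, 2 ^ (2 * k) ≤ U.card → ∃ Q ⊆ U, Q.card = k ∧ ConvexPos Q := by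
    intro U hUP hU
    obtain ⟨Q, hQU, hQ, hQconv⟩ := hES U.card U rfl (hgp.mono hUP)
    have hkQ : k ≤ Q.card := by
      have := Nat.le_log_of_pow_le one_lt_two hU
      omega
    obtain ⟨Q', hQ'Q, hQ'⟩ := exists_subset_card_eq hkQ
    exact ⟨Q', hQ'Q.trans hQU, hQ', hQconv.mono hQ'Q⟩
  obtain ⟨𝒬, R, h𝒬, h𝒬card, hR, hcover⟩ := exists_greedy_partition hk P hextract
  obtain ⟨F, hFconv, hFsep, hFcard⟩ := exists_sepPts_of_cover (c := Nat.clog 2 k)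
    (fun Q hQ ↦ ⟨(h𝒬 Q hQ).1, (h𝒬 Q hQ).2 ▸ Nat.le_pow_clog one_lt_two k⟩) hcover
  have hgroups : k * 𝒬.card ≤ n := mul_comm k _ ▸ hP ▸ h𝒬card
  exact ⟨F, hFconv, hFsep, le_trans (by exact_mod_cast hFcard)
    (count_le_twenty_mul_logb_logb_div_logb hn hgroups hR)⟩
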